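/- arXiv:0804.0566 — 2 statements merged into one kernel-verified Lean document; each statement's English description precedes it below -/
import Mathlib

section
/- For every ξ > 0 and w ∈ (−1,1), the integral ∫_{−1}^{1} Φ₀(ξ,w,z) dz equals: 12/π² if ξ ≤ 1/2; (12/π²)(ξ⁻¹−1) + (6/π²)(ξ⁻¹−1+|w|)·log((1+|w|)/(ξ⁻¹−1+|w|)) + (6/π²)(ξ⁻¹−1−|w|)·log((1−|w|)/(ξ⁻¹−1−|w|)) if 1/2 < ξ < 1/(1+|w|); (6/π²)(ξ⁻¹−1+|w|)·(1 + log((1+|w|)/(2|w|))) + (6/π²)(ξ⁻¹−1−|w|)·log(2|w|/(1+|w|−ξ⁻¹)) if 1/(1+|w|) < ξ < 1/(1−|w|); and 0 if ξ ≥ 1/(1−|w|). -/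
open Real Set MeasureTheory

noncomputable def Υ (x : ℝ) : ℝ := if x ≤ 0 then 0 else if x < 1 then x else 1

noncomputable def Φ₀ (ξ w z : ℝ) : ℝ :=
  if w + z ≠ 0 then (6 / π ^ 2) * Υ (1 + (ξ⁻¹ - max |w| |z| - 1) / |w + z|)
  else if ξ⁻¹ < 1 + |w| then 0 else 6 / π ^ 2

lemma ups_one {x : ℝ} (h : 1 ≤ x) : Υ x = 1 := by
  unfold Υ; rw [if_neg (by linarith), if_neg (by linarith)]

lemma ups_zero {x : ℝ} (h : x ≤ 0) : Υ x = 0 := by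
  unfold Υ; rw [if_pos h]

lemma ups_self {x : ℝ} (h0 : 0 ≤ x) (h1 : x ≤ 1) : Υ x = x := by
  unfold Υ
  split_ifs with h h'
  · exact le_antisymm h0 h
  · rfl
  · exact le_antisymm (not_lt.mp h') h1

lemma Phi_const {ξ w z : ℝ} (h : max |w| |z| + 1 ≤ ξ⁻¹) : Φ₀ ξ w z = 6 / π ^ 2 := by
  unfold Φ₀
  split_ifs with h1 h2
  · rw [ups_one (by
      have := div_nonneg (by linarith : (0:ℝ) ≤ ξ⁻¹ - max |w| |z| - 1) (abs_nonneg (w + z))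
      linarith), mul_one]
  · exact absurd h2 (by push_neg; linarith [le_max_left |w| |z|])
  · rfl

lemma Phi_zero {ξ w z : ℝ} (hz : w + z ≠ 0) (h : ξ⁻¹ + |w + z| ≤ max |w| |z| + 1) :
    Φ₀ ξ w z = 0 := by
  unfold Φ₀
  have habs : 0 < |w + z| := abs_pos.mpr hz
  have h2 : (ξ⁻¹ - max |w| |z| - 1) / |w + z| ≤ -1 := by
    rw [div_le_iff₀ habs]; linarith
  rw [if_pos hz, ups_zero (by linarith), mul_zero]

lemma Phi_mid {ξ w z : ℝ} (hz : w + z ≠ 0) (h1 : max |w| |z| + 1 - |w + z| ≤ ξ⁻¹)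
    (h2 : ξ⁻¹ ≤ max |w| |z| + 1) :
    Φ₀ ξ w z = 6 / π ^ 2 * ((ξ⁻¹ - max |w| |z| - 1 + |w + z|) / |w + z|) := by
  have habs : 0 < |w + z| := abs_pos.mpr hz
  have ht1 : (0:ℝ) ≤ 1 + (ξ⁻¹ - max |w| |z| - 1) / |w + z| := by
    have : (-1:ℝ) ≤ (ξ⁻¹ - max |w| |z| - 1) / |w + z| := by
      rw [le_div_iff₀ habs]; linarith
    linarith
  have ht2 : 1 + (ξ⁻¹ - max |w| |z| - 1) / |w + z| ≤ 1 := by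
    have : (ξ⁻¹ - max |w| |z| - 1) / |w + z| ≤ 0 :=
      div_nonpos_iff.mpr (Or.inr ⟨by linarith, habs.le⟩)
    linarith
  unfold Φ₀
  rw [if_pos hz, ups_self ht1 ht2]
  congr 1
  rw [add_div, div_self (ne_of_gt habs)]
  ring

lemma II_congr {f g : ℝ → ℝ} {a b : ℝ} (hg : IntervalIntegrable g volume a b)
    (h : Set.EqOn f g (Set.uIcc a b)) : IntervalIntegrable f volume a b := by
  rw [intervalIntegrable_iff] at hg ⊢
  exact hg.congr_fun (fun x hx => (h (uIoc_subset_uIcc hx)).symm) measurableSet_uIoc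

lemma contOn_inv_shift (k w c d : ℝ) (h : ∀ x ∈ Set.uIcc c d, x + w ≠ 0) :
    ContinuousOn (fun z : ℝ => k * (z + w)⁻¹) (Set.uIcc c d) :=
  continuousOn_const.mul (((continuous_id.add continuous_const).continuousOn).inv₀ h)

lemma int_inv_shift {a b w : ℝ} (h : (0:ℝ) ∉ Set.uIcc (a + w) (b + w)) :
    ∫ z in a..b, (z + w)⁻¹ = Real.log ((b + w) / (a + w)) := by
  have h1 := intervalIntegral.integral_comp_add_right (a := a) (b := b) (fun x : ℝ => x⁻¹) w
  rw [h1, integral_inv h]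

lemma integral_eq_zero_off {f : ℝ → ℝ} {a b : ℝ} (c : ℝ) (h : ∀ x, x ≠ c → f x = 0) :
    ∫ x in a..b, f x = 0 := by
  have hc : ∀ᵐ x : ℝ, x ≠ c := by
    rw [MeasureTheory.ae_iff]
    have hs : {x : ℝ | ¬x ≠ c} = {c} := by ext x; simp
    rw [hs]
    exact measure_singleton c
  have h0 : (∫ x in a..b, f x) = ∫ x in a..b, (fun _ : ℝ => (0:ℝ)) x :=
    intervalIntegral.integral_congr_ae (by filter_upwards [hc] with x hx _; exact h x hx)
  simpa using h0

lemma key (ξ w : ℝ) (hξ : 0 < ξ) (hw0 : 0 ≤ w) (hw1 : w < 1) :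
    (ξ ≤ 1 / 2 → ∫ z in (-1 : ℝ)..1, Φ₀ ξ w z = 12 / π ^ 2) ∧
    (1 / 2 < ξ → ξ < 1 / (1 + w) →
      ∫ z in (-1 : ℝ)..1, Φ₀ ξ w z =
        12 / π ^ 2 * (ξ⁻¹ - 1)
        + 6 / π ^ 2 * (ξ⁻¹ - 1 + w) * Real.log ((1 + w) / (ξ⁻¹ - 1 + w))
        + 6 / π ^ 2 * (ξ⁻¹ - 1 - w) * Real.log ((1 - w) / (ξ⁻¹ - 1 - w))) ∧
    (1 / (1 + w) < ξ → ξ < 1 / (1 - w) →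
      ∫ z in (-1 : ℝ)..1, Φ₀ ξ w z =
        6 / π ^ 2 * (ξ⁻¹ - 1 + w) * (1 + Real.log ((1 + w) / (2 * w)))
        + 6 / π ^ 2 * (ξ⁻¹ - 1 - w) * Real.log ((2 * w) / (1 + w - ξ⁻¹))) ∧
    (1 / (1 - w) ≤ ξ → ∫ z in (-1 : ℝ)..1, Φ₀ ξ w z = 0) := by
  have hξ' : 0 < ξ⁻¹ := inv_pos.mpr hξ
  have habsw : |w| = w := abs_of_nonneg hw0
  refine ⟨?_, ?_, ?_, ?_⟩
  · -- Part 1 : ξ ≤ 1/2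
    intro h2
    have hr : 2 ≤ ξ⁻¹ := by
      rw [le_div_iff₀ (by norm_num : (0:ℝ) < 2)] at h2
      have := mul_le_mul_of_nonneg_left h2 hξ'.le
      have e : ξ⁻¹ * (ξ * 2) = 2 := by field_simp
      linarith
    have hcong : Set.EqOn (Φ₀ ξ w) (fun _ : ℝ => 6 / π ^ 2) (Set.uIcc (-1 : ℝ) 1) := by
      intro z hz
      rw [Set.uIcc_of_le (by norm_num : (-1:ℝ) ≤ 1)] at hz
      apply Phi_const
      have h1 : |z| ≤ 1 := abs_le.mpr ⟨hz.1, hz.2⟩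
      have : max |w| |z| ≤ 1 := max_le (by rw [habsw]; linarith) h1
      linarith
    rw [intervalIntegral.integral_congr hcong, intervalIntegral.integral_const, smul_eq_mul]
    ring
  · -- Part 2 : 1/2 < ξ < 1/(1+w)
    intro hlo hhi
    have h1w : 0 < 1 + w := by linarith
    have ha1'' : ξ⁻¹ < 2 := by
      rw [div_lt_iff₀ (by norm_num : (0:ℝ) < 2)] at hlo
      have := mul_lt_mul_of_pos_left hlo hξ'
      have e : ξ⁻¹ * (ξ * 2) = 2 := by field_simp
      nlinarith
    have haw0 : 1 + w < ξ⁻¹ := by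
      rw [lt_div_iff₀ h1w] at hhi
      have := mul_lt_mul_of_pos_left hhi hξ'
      have e : ξ⁻¹ * (ξ * (1 + w)) = 1 + w := by field_simp
      nlinarith
    set a := ξ⁻¹ - 1 with ha
    clear_value a
    have haw : w < a := by rw [ha]; linarith
    have ha1 : a < 1 := by rw [ha]; linarith
    have ha0 : 0 < a := lt_of_le_of_lt hw0 haw
    have hEq1 : Set.EqOn (Φ₀ ξ w) (fun z : ℝ => 6 / π ^ 2 * (w - a) * (z + w)⁻¹)
        (Set.uIcc (-1 : ℝ) (-a)) := by
      intro z hz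
      rw [Set.uIcc_of_le (by linarith : (-1:ℝ) ≤ -a)] at hz
      obtain ⟨hz1, hz2⟩ := hz
      have hz0 : z < 0 := by linarith
      have habsz : |z| = -z := abs_of_neg hz0
      have hwz : w + z < 0 := by linarith
      have hm : max |w| |z| = -z := by
        rw [habsw, habsz]; exact max_eq_right (by linarith)
      have habs2 : |w + z| = -(w + z) := abs_of_neg hwz
      rw [Phi_mid (ne_of_lt hwz) (by rw [hm, habs2]; linarith) (by rw [hm]; linarith),
        hm, habs2]
      beta_reduce
      rw [mul_assoc]
      congr 1
      have hne : w + z ≠ 0 := ne_of_lt hwz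
      have h3 : -(w + z) ≠ 0 := neg_ne_zero.mpr hne
      have hne' : z + w ≠ 0 := by rw [add_comm]; exact hne
      rw [show ξ⁻¹ = a + 1 by rw [ha]; ring, ← div_eq_mul_inv, div_eq_div_iff h3 hne']
      ring
    have hEq2 : Set.EqOn (Φ₀ ξ w) (fun _ : ℝ => 6 / π ^ 2) (Set.uIcc (-a) a) := by
      intro z hz
      rw [Set.uIcc_of_le (by linarith : -a ≤ a)] at hz
      apply Phi_const
      have hmx : max |w| |z| ≤ a := max_le (by rw [habsw]; linarith)
        (abs_le.mpr ⟨hz.1, hz.2⟩)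
      linarith
    have hEq3 : Set.EqOn (Φ₀ ξ w) (fun z : ℝ => 6 / π ^ 2 * (a + w) * (z + w)⁻¹)
        (Set.uIcc a 1) := by
      intro z hz
      rw [Set.uIcc_of_le (by linarith : a ≤ 1)] at hz
      obtain ⟨hz1, hz2⟩ := hz
      have hz0 : 0 < z := lt_of_lt_of_le ha0 hz1
      have habsz : |z| = z := abs_of_pos hz0
      have hwz : 0 < w + z := by linarith
      have hm : max |w| |z| = z := by
        rw [habsw, habsz]; exact max_eq_right (by linarith)
      have habs2 : |w + z| = w + z := abs_of_pos hwz
      rw [Phi_mid (ne_of_gt hwz) (by rw [hm, habs2]; linarith) (by rw [hm]; linarith),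
        hm, habs2]
      beta_reduce
      rw [mul_assoc]
      congr 1
      have hne : w + z ≠ 0 := ne_of_gt hwz
      rw [show ξ⁻¹ = a + 1 by rw [ha]; ring, show z + w = w + z from add_comm z w]
      field_simp [hne]
      ring
    have hg1 : IntervalIntegrable (fun z : ℝ => 6 / π ^ 2 * (w - a) * (z + w)⁻¹)
        volume (-1) (-a) := by
      apply (contOn_inv_shift _ w _ _ ?_).intervalIntegrable
      intro x hx
      rw [Set.uIcc_of_le (by linarith : (-1:ℝ) ≤ -a)] at hx
      intro hc; linarith [hx.1, hx.2]
    have hg3 : IntervalIntegrable (fun z : ℝ => 6 / π ^ 2 * (a + w) * (z + w)⁻¹)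
        volume a 1 := by
      apply (contOn_inv_shift _ w _ _ ?_).intervalIntegrable
      intro x hx
      rw [Set.uIcc_of_le (by linarith : a ≤ 1)] at hx
      intro hc; linarith [hx.1, hx.2]
    have i1 := II_congr hg1 hEq1
    have i2 := II_congr intervalIntegrable_const hEq2
    have i3 := II_congr hg3 hEq3
    rw [← intervalIntegral.integral_add_adjacent_intervals i1 (i2.trans i3),
      ← intervalIntegral.integral_add_adjacent_intervals i2 i3,
      intervalIntegral.integral_congr hEq1, intervalIntegral.integral_congr hEq2,
      intervalIntegral.integral_congr hEq3,
      intervalIntegral.integral_const, smul_eq_mul,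
      intervalIntegral.integral_const_mul, intervalIntegral.integral_const_mul,
      int_inv_shift (by
        rw [Set.uIcc_of_le (by linarith : -1 + w ≤ -a + w)]
        simp only [Set.mem_Icc, not_and, not_le]
        intro _; linarith),
      int_inv_shift (by
        rw [Set.uIcc_of_le (by linarith : a + w ≤ 1 + w)]
        simp only [Set.mem_Icc, not_and, not_le]
        intro h; exfalso; linarith)]
    rw [show (-a + w) / (-1 + w) = (a - w) / (1 - w) by
      rw [div_eq_div_iff (by linarith) (by linarith)]; ring]
    rw [show (1 - w) / (a - w) = ((a - w) / (1 - w))⁻¹ by rw [inv_div], Real.log_inv]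
    ring
  · -- Part 3 : 1/(1+w) < ξ < 1/(1-w)
    intro hlo hhi
    have h1w : 0 < 1 + w := by linarith
    have h1w2 : 0 < 1 - w := by linarith
    have hr1 : ξ⁻¹ < 1 + w := by
      rw [div_lt_iff₀ h1w] at hlo
      have := mul_lt_mul_of_pos_left hlo hξ'
      have e : ξ⁻¹ * (ξ * (1 + w)) = 1 + w := by field_simp
      nlinarith
    have hr2 : 1 - w < ξ⁻¹ := by
      rw [lt_div_iff₀ h1w2] at hhi
      have := mul_lt_mul_of_pos_left hhi hξ'
      have e : ξ⁻¹ * (ξ * (1 - w)) = 1 - w := by field_simp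
      nlinarith
    set a := ξ⁻¹ - 1 with ha
    clear_value a
    have haw : a < w := by rw [ha]; linarith
    have haw2 : -w < a := by rw [ha]; linarith
    have hwpos : 0 < w := by linarith
    have hEq1 : Set.EqOn (Φ₀ ξ w) (fun _ : ℝ => (0:ℝ)) (Set.uIcc (-1 : ℝ) (-a)) := by
      intro z hz
      rw [Set.uIcc_of_le (by linarith : (-1:ℝ) ≤ -a)] at hz
      obtain ⟨hz1, hz2⟩ := hz
      by_cases hwz : w + z = 0
      · show Φ₀ ξ w z = 0
        unfold Φ₀
        rw [if_neg (not_not_intro hwz), if_pos (by rw [habsw]; linarith)]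
      · apply Phi_zero hwz
        rcases lt_or_ge z (-w) with h | h
        · have habsz : |z| = -z := abs_of_neg (by linarith)
          have habs2 : |w + z| = -(w + z) := abs_of_neg (by linarith)
          have hm : max |w| |z| = -z := by
            rw [habsw, habsz]; exact max_eq_right (by linarith)
          rw [hm, habs2]; linarith
        · have hwz' : 0 < w + z := lt_of_le_of_ne (by linarith) (Ne.symm hwz)
          have habs2 : |w + z| = w + z := abs_of_pos hwz'
          have hm : max |w| |z| = w := by
            rw [habsw]; exact max_eq_left (abs_le.mpr ⟨by linarith, by linarith⟩)
          rw [hm, habs2]; linarith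
    have hEq2 : Set.EqOn (Φ₀ ξ w)
        (fun z : ℝ => 6 / π ^ 2 + 6 / π ^ 2 * (a - w) * (z + w)⁻¹) (Set.uIcc (-a) w) := by
      intro z hz
      rw [Set.uIcc_of_le (by linarith : -a ≤ w)] at hz
      obtain ⟨hz1, hz2⟩ := hz
      have hwz : 0 < w + z := by linarith
      have hm : max |w| |z| = w := by
        rw [habsw]; exact max_eq_left (abs_le.mpr ⟨by linarith, by linarith⟩)
      have habs2 : |w + z| = w + z := abs_of_pos hwz
      rw [Phi_mid (ne_of_gt hwz) (by rw [hm, habs2]; linarith) (by rw [hm]; linarith),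
        hm, habs2]
      beta_reduce
      rw [show (6:ℝ) / π ^ 2 + 6 / π ^ 2 * (a - w) * (z + w)⁻¹
          = 6 / π ^ 2 * (1 + (a - w) * (z + w)⁻¹) by ring]
      congr 1
      have hne : w + z ≠ 0 := ne_of_gt hwz
      rw [show ξ⁻¹ = a + 1 by rw [ha]; ring, show z + w = w + z from add_comm z w]
      field_simp [hne]
      ring
    have hEq3 : Set.EqOn (Φ₀ ξ w) (fun z : ℝ => 6 / π ^ 2 * (a + w) * (z + w)⁻¹)
        (Set.uIcc w 1) := by
      intro z hz
      rw [Set.uIcc_of_le (by linarith : w ≤ 1)] at hz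
      obtain ⟨hz1, hz2⟩ := hz
      have hz0 : 0 < z := lt_of_lt_of_le hwpos hz1
      have habsz : |z| = z := abs_of_pos hz0
      have hwz : 0 < w + z := by linarith
      have hm : max |w| |z| = z := by
        rw [habsw, habsz]; exact max_eq_right (by linarith)
      have habs2 : |w + z| = w + z := abs_of_pos hwz
      rw [Phi_mid (ne_of_gt hwz) (by rw [hm, habs2]; linarith) (by rw [hm]; linarith),
        hm, habs2]
      beta_reduce
      rw [mul_assoc]
      congr 1
      have hne : w + z ≠ 0 := ne_of_gt hwz
      rw [show ξ⁻¹ = a + 1 by rw [ha]; ring, show z + w = w + z from add_comm z w]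
      field_simp [hne]
      ring
    have hg2 : IntervalIntegrable
        (fun z : ℝ => 6 / π ^ 2 + 6 / π ^ 2 * (a - w) * (z + w)⁻¹) volume (-a) w := by
      apply ContinuousOn.intervalIntegrable
      apply continuousOn_const.add
      apply contOn_inv_shift
      intro x hx
      rw [Set.uIcc_of_le (by linarith : -a ≤ w)] at hx
      intro hc; linarith [hx.1, hx.2]
    have hg2' : IntervalIntegrable (fun z : ℝ => 6 / π ^ 2 * (a - w) * (z + w)⁻¹)
        volume (-a) w := by
      apply (contOn_inv_shift _ w _ _ ?_).intervalIntegrable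
      intro x hx
      rw [Set.uIcc_of_le (by linarith : -a ≤ w)] at hx
      intro hc; linarith [hx.1, hx.2]
    have hg3 : IntervalIntegrable (fun z : ℝ => 6 / π ^ 2 * (a + w) * (z + w)⁻¹)
        volume w 1 := by
      apply (contOn_inv_shift _ w _ _ ?_).intervalIntegrable
      intro x hx
      rw [Set.uIcc_of_le (by linarith : w ≤ 1)] at hx
      intro hc; linarith [hx.1, hx.2]
    have i1 := II_congr intervalIntegrable_const hEq1
    have i2 := II_congr hg2 hEq2
    have i3 := II_congr hg3 hEq3
    rw [← intervalIntegral.integral_add_adjacent_intervals i1 (i2.trans i3),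
      ← intervalIntegral.integral_add_adjacent_intervals i2 i3,
      intervalIntegral.integral_congr hEq1, intervalIntegral.integral_congr hEq2,
      intervalIntegral.integral_congr hEq3,
      intervalIntegral.integral_zero,
      intervalIntegral.integral_add intervalIntegrable_const hg2',
      intervalIntegral.integral_const, smul_eq_mul,
      intervalIntegral.integral_const_mul, intervalIntegral.integral_const_mul,
      int_inv_shift (by
        rw [Set.uIcc_of_le (by linarith : -a + w ≤ w + w)]
        simp only [Set.mem_Icc, not_and, not_le]
        intro h; exfalso; linarith),
      int_inv_shift (by
        rw [Set.uIcc_of_le (by linarith : w + w ≤ 1 + w)]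
        simp only [Set.mem_Icc, not_and, not_le]
        intro h; exfalso; linarith)]
    rw [show (1 + w - ξ⁻¹ : ℝ) = w - a by rw [ha]; ring]
    rw [show (w + w : ℝ) = 2 * w by ring]
    rw [show (-a + w : ℝ) = w - a by ring]
    ring
  · -- Part 4 : 1/(1-w) ≤ ξ
    intro h4
    have h1w : 0 < 1 - w := by linarith
    have hr : ξ⁻¹ ≤ 1 - w := by
      rw [div_le_iff₀ h1w] at h4
      have := mul_le_mul_of_nonneg_left h4 hξ'.le
      have e : ξ⁻¹ * (ξ * (1 - w)) = 1 - w := by field_simp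
      linarith
    apply integral_eq_zero_off (-w)
    intro x hx
    have hwx : w + x ≠ 0 := fun h => hx (by linarith)
    apply Phi_zero hwx
    have h1 := abs_add_le w x
    have h2 := le_max_right |w| |x|
    rw [habsw] at h1
    linarith

/-- Explicit evaluation of the inner integral `∫_{−1}^{1} Φ₀(ξ,w,z) dz`. -/
theorem stmt6 (ξ w : ℝ) (hξ : 0 < ξ) (hw : w ∈ Ioo (-1 : ℝ) 1) :
    (ξ ≤ 1 / 2 → ∫ z in (-1 : ℝ)..1, Φ₀ ξ w z = 12 / π ^ 2) ∧
    (1 / 2 < ξ → ξ < 1 / (1 + |w|) →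
      ∫ z in (-1 : ℝ)..1, Φ₀ ξ w z =
        12 / π ^ 2 * (ξ⁻¹ - 1)
        + 6 / π ^ 2 * (ξ⁻¹ - 1 + |w|) * Real.log ((1 + |w|) / (ξ⁻¹ - 1 + |w|))
        + 6 / π ^ 2 * (ξ⁻¹ - 1 - |w|) * Real.log ((1 - |w|) / (ξ⁻¹ - 1 - |w|))) ∧
    (1 / (1 + |w|) < ξ → ξ < 1 / (1 - |w|) →
      ∫ z in (-1 : ℝ)..1, Φ₀ ξ w z =
        6 / π ^ 2 * (ξ⁻¹ - 1 + |w|) * (1 + Real.log ((1 + |w|) / (2 * |w|)))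
        + 6 / π ^ 2 * (ξ⁻¹ - 1 - |w|) * Real.log ((2 * |w|) / (1 + |w| - ξ⁻¹))) ∧
    (1 / (1 - |w|) ≤ ξ → ∫ z in (-1 : ℝ)..1, Φ₀ ξ w z = 0) := by
  obtain ⟨hw1, hw2⟩ := hw
  rcases le_or_gt 0 w with h0 | h0
  · rw [abs_of_nonneg h0]
    exact key ξ w hξ h0 hw2
  · have hpt : ∀ z : ℝ, Φ₀ ξ (-w) (-z) = Φ₀ ξ w z := by
      intro z
      have e : -w + -z = -(w + z) := by ring
      simp only [Φ₀, e, abs_neg, ne_eq, neg_eq_zero]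
    have hint : (∫ z in (-1:ℝ)..1, Φ₀ ξ w z) = ∫ z in (-1:ℝ)..1, Φ₀ ξ (-w) z := by
      have h1 : (∫ z in (-1:ℝ)..1, Φ₀ ξ w z) = ∫ z in (-1:ℝ)..1, Φ₀ ξ (-w) (-z) :=
        intervalIntegral.integral_congr (fun z _ => (hpt z).symm)
      rw [h1, intervalIntegral.integral_comp_neg (fun z => Φ₀ ξ (-w) z)]
      norm_num
    rw [abs_of_neg h0, hint]
    exact key ξ (-w) hξ (by linarith) (by linarith)
end

section
/- The function Φ(ξ,w) = ∫_ξ^∞ ∫_{−1}^{1} Φ₀(η,w,z) dz dη is continuous on ℝ_{>0} × (−1,1). -/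
/-!
For fixed `z`, `Φ₀ η w z` is continuous in `(η, w)` wherever `η ≠ 0` and `w + z ≠ 0`, hence for
almost every `z`, and it is bounded by `6 / π²`; by dominated convergence the inner integral
`∫ z in -1..1, Φ₀ η w z` is continuous on `η > 0`. It vanishes as soon as `η⁻¹ < 1 - |w|`, so near
any point of `ℝ_{>0} × (-1, 1)` the function `Φ` is the integral of a continuous function over a
bounded interval `[ξ, R]` whose left end point moves continuously.
-/

open Real Set MeasureTheory

noncomputable def Φ (ξ w : ℝ) : ℝ := ∫ η in Ioi ξ, ∫ z in (-1 : ℝ)..1, Φ₀ η w z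

open Filter Topology

lemma continuousAt_integral_Ioi_of_eventually_eq_zero {X E : Type*} [TopologicalSpace X]
    [NormedAddCommGroup E] [NormedSpace ℝ E] {f : X → ℝ → E} (hf : Continuous f.uncurry)
    {s : X → ℝ} (hs : Continuous s) {x₀ : X} {R : ℝ} (hR : s x₀ < R)
    (hf_zero : ∀ᶠ x in 𝓝 x₀, ∀ t, R < t → f x t = 0) :
    ContinuousAt (fun x => ∫ t in Ioi (s x), f x t) x₀ := by
  refine (intervalIntegral.continuous_parametric_intervalIntegral_of_continuous
    (μ := volume) (a₀ := R) hf hs).neg.continuousAt.congr ?_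
  filter_upwards [hs.continuousAt.eventually_lt continuousAt_const hR, hf_zero] with x hsx hx
  rw [Pi.neg_apply, ← intervalIntegral.integral_symm, intervalIntegral.integral_of_le hsx.le]
  refine (setIntegral_eq_of_subset_of_forall_sdiff_eq_zero measurableSet_Ioi
    Ioc_subset_Ioi_self fun t ht => hx t ?_).symm
  by_contra! htR
  exact ht.2 ⟨ht.1, htR⟩

lemma Υ_eq_projIcc (x : ℝ) : Υ x = projIcc 0 1 zero_le_one x := by
  rw [coe_projIcc]
  unfold Υ
  split_ifs <;> simp only [max_def, min_def] <;> split_ifs <;> linarith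

lemma continuous_Υ : Continuous Υ := by
  rw [funext Υ_eq_projIcc]
  exact continuous_subtype_val.comp continuous_projIcc

lemma Υ_mem_Icc (x : ℝ) : Υ x ∈ Icc 0 1 := by
  rw [Υ_eq_projIcc]; exact (projIcc (0 : ℝ) 1 zero_le_one x).prop

lemma norm_Φ₀_le (η w z : ℝ) : ‖Φ₀ η w z‖ ≤ 6 / π ^ 2 := by
  have hc : 0 ≤ 6 / π ^ 2 := by positivity
  unfold Φ₀
  split_ifs
  · obtain ⟨h0, h1⟩ := Υ_mem_Icc (1 + (η⁻¹ - max |w| |z| - 1) / |w + z|)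
    rw [norm_mul, norm_of_nonneg hc, norm_of_nonneg h0]
    exact mul_le_of_le_one_right hc h1
  · simpa using hc
  · rw [norm_of_nonneg hc]

lemma Φ₀_eq_zero_of_inv_lt {η w : ℝ} (h : η⁻¹ < 1 - |w|) (z : ℝ) : Φ₀ η w z = 0 := by
  unfold Φ₀
  split_ifs with hwz h'
  · suffices 1 + (η⁻¹ - max |w| |z| - 1) / |w + z| ≤ 0 by
      simp only [Υ, if_pos this, mul_zero]
    have hpos : 0 < |w + z| := abs_pos.mpr hwz
    have : (η⁻¹ - max |w| |z| - 1) / |w + z| ≤ -1 := by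
      rw [div_le_iff₀ hpos]
      linarith [abs_add_le w z, le_max_right |w| |z|]
    linarith
  · rfl
  · linarith [abs_nonneg w]

lemma measurable_Φ₀ (η w : ℝ) : Measurable (Φ₀ η w) := by
  unfold Φ₀
  refine Measurable.ite ?_ (measurable_const.mul (continuous_Υ.measurable.comp ?_))
    measurable_const
  · exact (measurableSet_eq_fun (by fun_prop) measurable_const).compl
  · fun_prop

lemma continuousAt_Φ₀ {η w z : ℝ} (hη : η ≠ 0) (hwz : w + z ≠ 0) :
    ContinuousAt (fun p : ℝ × ℝ => Φ₀ p.1 p.2 z) (η, w) := by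
  have hcont : ContinuousAt
      (fun p : ℝ × ℝ => 6 / π ^ 2 * Υ (1 + (p.1⁻¹ - max |p.2| |z| - 1) / |p.2 + z|)) (η, w) := by
    refine continuousAt_const.mul (continuous_Υ.continuousAt.comp ?_)
    exact continuousAt_const.add <| ContinuousAt.div (by fun_prop (disch := exact hη))
      (by fun_prop) (abs_ne_zero.mpr hwz)
  refine hcont.congr ?_
  have : ∀ᶠ p : ℝ × ℝ in 𝓝 (η, w), p.2 + z ≠ 0 :=
    (continuous_snd.add continuous_const).continuousAt.eventually_ne hwz
  filter_upwards [this] with p hp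
  simp only [Φ₀, if_pos hp]

lemma continuousAt_intervalIntegral_Φ₀ {η : ℝ} (hη : η ≠ 0) (w : ℝ) :
    ContinuousAt (fun p : ℝ × ℝ => ∫ z in (-1 : ℝ)..1, Φ₀ p.1 p.2 z) (η, w) := by
  refine intervalIntegral.continuousAt_of_dominated_interval (bound := fun _ => 6 / π ^ 2)
    (.of_forall fun p => (measurable_Φ₀ p.1 p.2).aestronglyMeasurable)
    (.of_forall fun p => .of_forall fun z _ => norm_Φ₀_le p.1 p.2 z)
    intervalIntegrable_const ?_
  filter_upwards [volume.ae_ne (-w)] with z hz _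
  exact continuousAt_Φ₀ hη fun h => hz (by linarith)

/-- `Φ(ξ,w)` is continuous on `ℝ_{>0} × (−1,1)`. -/
theorem stmt11 :
    ContinuousOn (fun p : ℝ × ℝ => Φ p.1 p.2) (Ioi (0 : ℝ) ×ˢ Ioo (-1 : ℝ) 1) := by
  rintro ⟨ξ₀, w₀⟩ ⟨hξ₀, hw₀⟩
  have hw₀' : 0 < 1 - |w₀| := sub_pos.2 (abs_lt.2 hw₀)
  set c := ξ₀ / 2
  set R := ξ₀ + (1 - |w₀|)⁻¹
  have hR : (1 - |w₀|)⁻¹ < R := lt_add_of_pos_left _ hξ₀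
  have hw₀R : |w₀| < 1 - R⁻¹ := by linarith [inv_lt_of_inv_lt₀ hw₀' hR]
  -- freezing the inner integral for `η ≤ c` makes it continuous on all of `ℝ × ℝ`
  set f : ℝ × ℝ → ℝ → ℝ := fun p η => ∫ z in (-1 : ℝ)..1, Φ₀ (max η c) p.2 z
  have hf : Continuous f.uncurry := continuous_iff_continuousAt.2 fun q =>
    (continuousAt_intervalIntegral_Φ₀ ((half_pos hξ₀).trans_le (le_max_right q.2 c)).ne'
      q.1.2).comp (f := fun q : (ℝ × ℝ) × ℝ => (max q.2 c, q.1.2)) (by fun_prop)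
  have hf_zero : ∀ᶠ p in 𝓝 (ξ₀, w₀), ∀ η, R < η → f p η = 0 := by
    filter_upwards [continuous_snd.abs.continuousAt.eventually_lt
      continuousAt_const hw₀R] with p hp η hη
    have : (max η c)⁻¹ < R⁻¹ :=
      inv_strictAnti₀ ((inv_pos.2 hw₀').trans hR) (hη.trans_le (le_max_left η c))
    simp only [f, Φ₀_eq_zero_of_inv_lt (show (max η c)⁻¹ < 1 - |p.2| by linarith),
      intervalIntegral.integral_zero]
  refine ((continuousAt_integral_Ioi_of_eventually_eq_zero hf continuous_fst
    (lt_add_of_pos_right ξ₀ (inv_pos.2 hw₀')) hf_zero).congr ?_).continuousWithinAt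
  filter_upwards [continuousAt_const.eventually_lt continuousAt_fst (half_lt_self hξ₀)]
    with p hp
  refine setIntegral_congr_fun measurableSet_Ioi fun η hη => ?_
  simp only [f, max_eq_left (show c ≤ η from hp.le.trans (le_of_lt hη))]
end
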